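/- arXiv:1105.2504 — 2 statements merged into one kernel-verified Lean document; each statement's English description precedes it below -/
import Mathlib

section
/- Let (a_n)_{n≥1} be a sequence of nonnegative reals and λ ∈ (0,1) such that a_{n+1} ≤ (λ/n) Σ_{i=1}^n a_i for every n ≥ 1. Then a_n ≤ a_1 ∏_{j=1}^{n-1} (1 - (1-λ)/j) for all n ≥ 1, and in particular a_n → 0 as n → ∞. -/
/-!
Write `P n = ∏_{j=1}^{n} (1 - (1-λ)/j)`. Since `(n+1) P (n+1) = (n+λ) P n`, telescoping gives
`λ (P 0 + ⋯ + P (n-1)) = n P n`, so the bound `a i ≤ a 1 · P (i-1)` for `i ≤ n` turns the recursion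
into `a (n+1) ≤ a 1 · P n`. Finally `1 - x ≤ exp (-x)` bounds `P n` by `exp (-(1-λ) H n)`,
and the harmonic numbers `H n` diverge.
-/

open Finset Filter Topology

noncomputable def decayProduct (lam : ℝ) (n : ℕ) : ℝ :=
  ∏ j ∈ Icc 1 n, (1 - (1 - lam) / (j : ℝ))

namespace decayProduct

variable {lam : ℝ}

theorem succ (lam : ℝ) (n : ℕ) :
    decayProduct lam (n + 1) = decayProduct lam n * (1 - (1 - lam) / ((n : ℝ) + 1)) := by
  rw [decayProduct, prod_Icc_succ_top (by omega), Nat.cast_succ, decayProduct]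

theorem lam_mul_sum_Icc (lam : ℝ) (n : ℕ) :
    lam * ∑ i ∈ Icc 1 n, decayProduct lam (i - 1) = n * decayProduct lam n := by
  induction n with
  | zero => simp
  | succ n ih =>
    have hn : (n : ℝ) + 1 ≠ 0 := by positivity
    rw [sum_Icc_succ_top (by omega), mul_add, ih, Nat.add_sub_cancel, succ, Nat.cast_succ]
    field_simp
    ring

theorem factor_nonneg (hlam : 0 ≤ lam) {j : ℕ} (hj : 1 ≤ j) : 0 ≤ 1 - (1 - lam) / (j : ℝ) := by
  have hj : (1 : ℝ) ≤ j := by exact_mod_cast hj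
  rw [sub_nonneg, div_le_one (by linarith)]
  linarith

theorem nonneg (hlam : 0 ≤ lam) (n : ℕ) : 0 ≤ decayProduct lam n :=
  prod_nonneg fun _ hj => factor_nonneg hlam (mem_Icc.mp hj).1

theorem le_exp_neg_harmonic (hlam : 0 ≤ lam) (n : ℕ) :
    decayProduct lam n ≤ Real.exp (-((1 - lam) * harmonic n)) := by
  have hH : ((harmonic n : ℚ) : ℝ) = ∑ j ∈ Icc 1 n, (j : ℝ)⁻¹ := by
    simp only [harmonic_eq_sum_Icc, Rat.cast_sum, Rat.cast_inv, Rat.cast_natCast]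
  rw [hH, mul_sum, ← sum_neg_distrib, Real.exp_sum]
  refine prod_le_prod (fun j hj => ?_) fun j _ => ?_
  · exact factor_nonneg hlam (mem_Icc.mp hj).1
  · exact (Real.one_sub_le_exp_neg _).trans_eq (by rw [div_eq_mul_inv])

theorem tendsto_zero (hlam0 : 0 ≤ lam) (hlam1 : lam < 1) :
    Tendsto (decayProduct lam) atTop (𝓝 0) := by
  have hH : Tendsto (fun n : ℕ => (harmonic n : ℝ)) atTop atTop :=
    tendsto_atTop_mono log_add_one_le_harmonic <| Real.tendsto_log_atTop.comp <|
      tendsto_natCast_atTop_atTop.comp (tendsto_add_atTop_nat 1)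
  have hexp : Tendsto (fun n : ℕ => Real.exp (-((1 - lam) * harmonic n))) atTop (𝓝 0) :=
    Real.tendsto_exp_neg_atTop_nhds_zero.comp (hH.const_mul_atTop (by linarith))
  exact squeeze_zero (nonneg hlam0) (le_exp_neg_harmonic hlam0) hexp

end decayProduct

theorem le_mul_decayProduct_of_le_mul_average {a : ℕ → ℝ} {lam : ℝ} (hlam : 0 ≤ lam)
    (hrec : ∀ n : ℕ, 1 ≤ n → a (n + 1) ≤ lam / n * ∑ i ∈ Icc 1 n, a i) :
    ∀ n : ℕ, 1 ≤ n → a n ≤ a 1 * decayProduct lam (n - 1) := by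
  intro n hn
  induction n using Nat.strong_induction_on with
  | _ n ih =>
    obtain ⟨m, rfl⟩ : ∃ m, n = m + 1 := ⟨n - 1, by omega⟩
    rcases Nat.eq_zero_or_pos m with rfl | hm
    · simp [decayProduct]
    have hm' : (m : ℝ) ≠ 0 := by positivity
    calc a (m + 1) ≤ lam / m * ∑ i ∈ Icc 1 m, a i := hrec m hm
      _ ≤ lam / m * ∑ i ∈ Icc 1 m, a 1 * decayProduct lam (i - 1) := by
        gcongr with i hi
        exact ih i (by grind) (mem_Icc.mp hi).1
      _ = a 1 * decayProduct lam m := by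
        rw [← mul_sum, mul_left_comm, div_mul_eq_mul_div, decayProduct.lam_mul_sum_Icc]
        field_simp
      _ = a 1 * decayProduct lam (m + 1 - 1) := by rw [Nat.add_sub_cancel]

theorem recursive_sequence_decay (a : ℕ → ℝ) (ha : ∀ n, 1 ≤ n → 0 ≤ a n)
    (lam : ℝ) (hlam0 : 0 < lam) (hlam1 : lam < 1)
    (hrec : ∀ n : ℕ, 1 ≤ n → a (n + 1) ≤ lam / n * ∑ i ∈ Finset.Icc 1 n, a i) :
    (∀ n : ℕ, 1 ≤ n →
      a n ≤ a 1 * ∏ j ∈ Finset.Icc 1 (n - 1), (1 - (1 - lam) / (j : ℝ))) ∧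
    Filter.Tendsto (fun n => a n) Filter.atTop (nhds 0) := by
  have hbound := le_mul_decayProduct_of_le_mul_average hlam0.le hrec
  refine ⟨hbound, ?_⟩
  have hlim : Tendsto (fun n => a 1 * decayProduct lam (n - 1)) atTop (𝓝 0) := by
    simpa using ((decayProduct.tendsto_zero hlam0.le hlam1).comp
      (tendsto_sub_atTop_nat 1)).const_mul (a 1)
  exact squeeze_zero' (eventually_atTop.2 ⟨1, ha⟩) (eventually_atTop.2 ⟨1, hbound⟩) hlim
end

section
/- Let p ∈ (2, ∞) and let ω: ℝ^d → ℝ satisfy |ξ|^p ≤ ω(ξ) ≤ ω̄|ξ|^p with ω̄ ≥ 1. Define, for symmetric d×d matrices Ξ, Ω(Ξ) = inf { Σ_{j=1}^d ω(ξ_j) : Ξ = Σ_{j=1}^d τ_j ξ_j ξ_jᵀ, ξ_j ∈ ℝ^d, τ_j ∈ {±1} }. Then d^{-(p/2-1)} ‖Ξ‖_1^{p/2} ≤ Ω(Ξ) ≤ ω̄ ‖Ξ‖_1^{p/2} for every symmetric Ξ, where ‖Ξ‖_1 is the sum of absolute values of the eigenvalues of Ξ. -/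
open Matrix

/-- The Euclidean norm of a vector in `Fin d → ℝ`. -/
noncomputable def eNorm {d : ℕ} (v : Fin d → ℝ) : ℝ := Real.sqrt (∑ i, (v i) ^ 2)

/-- The matrix weight function `Ω(Ξ)` built from a vector weight `ω`, defined as the
infimum of `∑ ω(ξ_j)` over signed rank-one decompositions `Ξ = ∑ τ_j ξ_j ξ_jᵀ`. -/
noncomputable def matOmega {d : ℕ} (w : (Fin d → ℝ) → ℝ)
    (X : Matrix (Fin d) (Fin d) ℝ) : ℝ :=
  sInf {s : ℝ | ∃ (ξ : Fin d → Fin d → ℝ) (τ : Fin d → ℝ),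
    (∀ j, τ j = 1 ∨ τ j = -1) ∧
    X = ∑ j, τ j • Matrix.vecMulVec (ξ j) (ξ j) ∧
    s = ∑ j, w (ξ j)}

/-! Writing the spectral decomposition as `Ξ = ∑ sign(λ_j) ξ_j ξ_jᵀ` with `ξ_j = √|λ_j| u_j`
gives an admissible decomposition with `|ξ_j|² = |λ_j|`, so superadditivity of `t ↦ t^(p/2)`
yields the upper bound. Conversely, for any admissible decomposition, testing against the
eigenvectors gives `|λ_i| ≤ ∑_j ⟪u_i, ξ_j⟫²`; summing over `i` and using Parseval,
`‖Ξ‖₁ ≤ ∑_j |ξ_j|²`, and the power mean inequality for `t ↦ t^(p/2)` over `d` terms yields the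
lower bound. -/

open Finset
open scoped RealInnerProductSpace

theorem Real.sum_rpow_le_rpow_sum {ι : Type*} (s : Finset ι) {f : ι → ℝ} {p : ℝ}
    (hp : 1 ≤ p) (hf : ∀ i ∈ s, 0 ≤ f i) : ∑ i ∈ s, f i ^ p ≤ (∑ i ∈ s, f i) ^ p := by
  induction s using Finset.cons_induction with
  | empty => simp [Real.zero_rpow (by positivity : p ≠ 0)]
  | cons a s _ ih =>
    rw [sum_cons, sum_cons]
    have hfs := fun i hi => hf i (mem_cons_of_mem hi)
    calc f a ^ p + ∑ i ∈ s, f i ^ p ≤ f a ^ p + (∑ i ∈ s, f i) ^ p := by gcongr; exact ih hfs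
      _ ≤ (f a + ∑ i ∈ s, f i) ^ p :=
        Real.add_rpow_le_rpow_add (hf a (mem_cons_self a s)) (sum_nonneg hfs) hp

theorem Real.card_rpow_mul_rpow_sum_le_sum_rpow {ι : Type*} [Fintype ι] {f : ι → ℝ} {p : ℝ}
    (hp : 1 ≤ p) (hf : ∀ i, 0 ≤ f i) :
    (Fintype.card ι : ℝ) ^ (-(p - 1)) * (∑ i, f i) ^ p ≤ ∑ i, f i ^ p := by
  rcases isEmpty_or_nonempty ι with hι | hι
  · simp [Real.zero_rpow (by positivity : p ≠ 0)]
  have hcard : (0 : ℝ) < Fintype.card ι := by exact_mod_cast Fintype.card_pos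
  calc (Fintype.card ι : ℝ) ^ (-(p - 1)) * (∑ i, f i) ^ p
      ≤ (Fintype.card ι : ℝ) ^ (-(p - 1)) * ((Fintype.card ι : ℝ) ^ (p - 1) * ∑ i, f i ^ p) := by
        gcongr
        exact Real.rpow_sum_le_const_mul_sum_rpow_of_nonneg univ hp fun i _ => hf i
    _ = ∑ i, f i ^ p := by
        rw [← mul_assoc, ← Real.rpow_add hcard, neg_add_cancel, Real.rpow_zero, one_mul]

theorem eNorm_eq_norm {d : ℕ} (v : Fin d → ℝ) : eNorm v = ‖WithLp.toLp 2 v‖ := by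
  simp [eNorm, EuclideanSpace.norm_eq]

theorem eNorm_rpow {d : ℕ} (v : Fin d → ℝ) (p : ℝ) :
    eNorm v ^ p = (‖WithLp.toLp 2 v‖ ^ 2) ^ (p / 2) := by
  rw [eNorm_eq_norm, ← Real.rpow_natCast, ← Real.rpow_mul (norm_nonneg _)]
  ring_nf

namespace Matrix.IsHermitian

variable {n ι : Type*} [Fintype n] [DecidableEq n] [Fintype ι] {X : Matrix n n ℝ}

theorem eq_sum_eigenvalues_smul_vecMulVec (hX : X.IsHermitian) :
    X = ∑ j, hX.eigenvalues j • vecMulVec ⇑(hX.eigenvectorBasis j) ⇑(hX.eigenvectorBasis j) := by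
  conv_lhs => rw [hX.spectral_theorem]
  ext i k
  simp only [mul_apply, diagonal_apply, sum_apply, smul_apply, vecMulVec_apply, star_apply,
    eigenvectorUnitary_apply, Function.comp_apply, RCLike.star_def, smul_eq_mul,
    Unitary.conjStarAlgAut_apply]
  refine sum_congr rfl fun j _ => ?_
  simp [mul_comm, mul_assoc]

theorem eigenvalues_eq_sum_inner_sq (hX : X.IsHermitian) {ξ : ι → n → ℝ} {τ : ι → ℝ}
    (hdec : X = ∑ j, τ j • vecMulVec (ξ j) (ξ j)) (i : n) :
    hX.eigenvalues i = ∑ j, τ j * ⟪hX.eigenvectorBasis i, WithLp.toLp 2 (ξ j)⟫ ^ 2 := by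
  set u := hX.eigenvectorBasis i
  calc hX.eigenvalues i = u.ofLp ⬝ᵥ (X *ᵥ u.ofLp) := by simpa using hX.eigenvalues_eq i
    _ = _ := by
      rw [hdec]
      simp only [sum_mulVec, dotProduct_sum, EuclideanSpace.inner_eq_star_dotProduct, star_trivial]
      refine sum_congr rfl fun j _ => ?_
      rw [smul_mulVec, vecMulVec_mulVec, op_smul_eq_smul, dotProduct_smul, dotProduct_smul,
        smul_eq_mul, smul_eq_mul, dotProduct_comm u.ofLp (ξ j), sq]

theorem sum_abs_eigenvalues_le (hX : X.IsHermitian) {ξ : ι → n → ℝ} {τ : ι → ℝ}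
    (hdec : X = ∑ j, τ j • vecMulVec (ξ j) (ξ j)) :
    ∑ i, |hX.eigenvalues i| ≤ ∑ j, |τ j| * ‖WithLp.toLp 2 (ξ j)‖ ^ 2 := by
  calc ∑ i, |hX.eigenvalues i|
      ≤ ∑ i, ∑ j, |τ j| * ⟪hX.eigenvectorBasis i, WithLp.toLp 2 (ξ j)⟫ ^ 2 := by
        gcongr with i
        rw [hX.eigenvalues_eq_sum_inner_sq hdec i]
        refine (abs_sum_le_sum_abs _ _).trans_eq (sum_congr rfl fun j _ => ?_)
        rw [abs_mul, abs_sq]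
    _ = ∑ j, |τ j| * ‖WithLp.toLp 2 (ξ j)‖ ^ 2 := by
        rw [sum_comm]
        simp only [← mul_sum, hX.eigenvectorBasis.sum_sq_inner_right]

theorem exists_signed_rankOne_decomposition (hX : X.IsHermitian) :
    ∃ (ξ : n → n → ℝ) (τ : n → ℝ), (∀ j, τ j = 1 ∨ τ j = -1) ∧
      X = ∑ j, τ j • vecMulVec (ξ j) (ξ j) ∧
      ∀ j, ‖WithLp.toLp 2 (ξ j)‖ ^ 2 = |hX.eigenvalues j| := by
  refine ⟨fun j => √|hX.eigenvalues j| • ⇑(hX.eigenvectorBasis j),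
    fun j => if 0 ≤ hX.eigenvalues j then 1 else -1,
    fun j => by dsimp only; split_ifs <;> simp, ?_, fun j => ?_⟩
  · conv_lhs => rw [hX.eq_sum_eigenvalues_smul_vecMulVec]
    refine sum_congr rfl fun j _ => ?_
    rw [smul_vecMulVec, vecMulVec_smul, smul_smul, smul_smul, mul_assoc,
      Real.mul_self_sqrt (abs_nonneg _)]
    dsimp only
    split_ifs with h
    · rw [abs_of_nonneg h, one_mul]
    · rw [abs_of_neg (not_le.mp h), neg_one_mul, neg_neg]
  · rw [WithLp.toLp_smul, WithLp.toLp_ofLp, norm_smul, mul_pow,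
      hX.eigenvectorBasis.orthonormal.1 j, Real.norm_eq_abs, sq_abs, Real.sq_sqrt (abs_nonneg _),
      one_pow, mul_one]

end Matrix.IsHermitian

theorem matOmega_le_sum {d : ℕ} {w : (Fin d → ℝ) → ℝ} (hw : ∀ ξ, 0 ≤ w ξ)
    {X : Matrix (Fin d) (Fin d) ℝ} {ξ : Fin d → Fin d → ℝ} {τ : Fin d → ℝ}
    (hτ : ∀ j, τ j = 1 ∨ τ j = -1) (hdec : X = ∑ j, τ j • vecMulVec (ξ j) (ξ j)) :
    matOmega w X ≤ ∑ j, w (ξ j) :=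
  csInf_le ⟨0, by rintro _ ⟨ξ', -, -, -, rfl⟩; exact sum_nonneg fun j _ => hw (ξ' j)⟩
    ⟨ξ, τ, hτ, hdec, rfl⟩

theorem le_matOmega {d : ℕ} {w : (Fin d → ℝ) → ℝ} {X : Matrix (Fin d) (Fin d) ℝ} {c : ℝ}
    (hdec : ∃ (ξ : Fin d → Fin d → ℝ) (τ : Fin d → ℝ),
      (∀ j, τ j = 1 ∨ τ j = -1) ∧ X = ∑ j, τ j • vecMulVec (ξ j) (ξ j))
    (h : ∀ (ξ : Fin d → Fin d → ℝ) (τ : Fin d → ℝ), (∀ j, τ j = 1 ∨ τ j = -1) →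
      X = ∑ j, τ j • vecMulVec (ξ j) (ξ j) → c ≤ ∑ j, w (ξ j)) :
    c ≤ matOmega w X := by
  obtain ⟨ξ, τ, hτ, hX⟩ := hdec
  refine le_csInf ⟨_, ξ, τ, hτ, hX, rfl⟩ ?_
  rintro _ ⟨ξ', τ', hτ', hdec', rfl⟩
  exact h ξ' τ' hτ' hdec'

theorem matOmega_compatible {d : ℕ} (p pbar : ℝ) (hp : 2 < p) (hpbar : 1 ≤ pbar)
    (w : (Fin d → ℝ) → ℝ)
    (hbound : ∀ ξ, eNorm ξ ^ p ≤ w ξ ∧ w ξ ≤ pbar * eNorm ξ ^ p)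
    (X : Matrix (Fin d) (Fin d) ℝ) (hX : X.IsHermitian) :
    (d : ℝ) ^ (-(p / 2 - 1)) * (∑ j, |hX.eigenvalues j|) ^ (p / 2) ≤ matOmega w X ∧
    matOmega w X ≤ pbar * (∑ j, |hX.eigenvalues j|) ^ (p / 2) := by
  have hq : 1 ≤ p / 2 := by linarith
  obtain ⟨ξ₀, τ₀, hτ₀, hdec₀, hnorm₀⟩ := hX.exists_signed_rankOne_decomposition
  constructor
  · refine le_matOmega ⟨ξ₀, τ₀, hτ₀, hdec₀⟩ fun ξ τ hτ hdec => ?_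
    have habs : ∀ j, |τ j| = 1 := fun j => by rcases hτ j with h | h <;> simp [h]
    have htrace := hX.sum_abs_eigenvalues_le hdec
    simp only [habs, one_mul] at htrace
    calc (d : ℝ) ^ (-(p / 2 - 1)) * (∑ j, |hX.eigenvalues j|) ^ (p / 2)
        ≤ (Fintype.card (Fin d) : ℝ) ^ (-(p / 2 - 1)) *
            (∑ j, ‖WithLp.toLp 2 (ξ j)‖ ^ 2) ^ (p / 2) := by
          rw [Fintype.card_fin]; gcongr
      _ ≤ ∑ j, (‖WithLp.toLp 2 (ξ j)‖ ^ 2) ^ (p / 2) :=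
          Real.card_rpow_mul_rpow_sum_le_sum_rpow hq fun j => by positivity
      _ ≤ ∑ j, w (ξ j) := sum_le_sum fun j _ => eNorm_rpow (ξ j) p ▸ (hbound (ξ j)).1
  · have hw : ∀ ξ, 0 ≤ w ξ := fun ξ =>
      (Real.rpow_nonneg (Real.sqrt_nonneg _) p).trans (hbound ξ).1
    calc matOmega w X ≤ ∑ j, w (ξ₀ j) := matOmega_le_sum hw hτ₀ hdec₀
      _ ≤ ∑ j, pbar * |hX.eigenvalues j| ^ (p / 2) := by
          gcongr with j
          simpa only [eNorm_rpow, hnorm₀] using (hbound (ξ₀ j)).2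
      _ = pbar * ∑ j, |hX.eigenvalues j| ^ (p / 2) := (mul_sum _ _ _).symm
      _ ≤ pbar * (∑ j, |hX.eigenvalues j|) ^ (p / 2) := by
          gcongr
          exact Real.sum_rpow_le_rpow_sum _ hq fun j _ => abs_nonneg _
end
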